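/- Let g : ℝ² → ℂ be a smooth function which is even in its first variable, i.e. g(−s,t) = g(s,t) for all (s,t), and which satisfies the three partial differential equations g_{ssss} − g_{tt} − 2·g_{ss} − 3·g = 0, g_{ssss} − 6·g_{ss} + 3·g_{tt} + 9·g = 0, and g_{ssst} − 6·g_{st} = 0, identically on ℝ². Then there exist complex constants a, b, c such that g(s,t) = a·cosh(√3·s) + b·cos(√3·t) + c·sin(√3·t) for all (s,t) ∈ ℝ². -/

import Mathlib

/-- Partial derivative with respect to the first variable of a complex-valued function of
two real variables. -/
noncomputable def pdS (g : ℝ → ℝ → ℂ) (s t : ℝ) : ℂ := deriv (fun u => g u t) s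

/-- Partial derivative with respect to the second variable of a complex-valued function of
two real variables. -/
noncomputable def pdT (g : ℝ → ℝ → ℂ) (s t : ℝ) : ℂ := deriv (fun u => g s u) t

open Complex Function

namespace Stmt7Aux

noncomputable def kk : ℂ := (Real.sqrt 3 : ℝ)

lemma kk_sq : kk * kk = 3 := by
  rw [kk, ← Complex.ofReal_mul, Real.mul_self_sqrt (by norm_num : (0:ℝ) ≤ 3)]
  norm_num

lemma kk_ne : kk ≠ 0 := by
  simp only [kk, ne_eq, Complex.ofReal_eq_zero]
  positivity

/-- derivative of `s ↦ kk * s`. -/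
lemma hasDerivAt_lin (x : ℝ) : HasDerivAt (fun s : ℝ => kk * (s : ℂ)) kk x := by
  simpa using (Complex.ofRealCLM.hasDerivAt (x := x)).const_mul kk

lemma hasDerivAt_ch (x : ℝ) :
    HasDerivAt (fun s : ℝ => Complex.cosh (kk * s)) (kk * Complex.sinh (kk * x)) x := by
  have := (Complex.hasDerivAt_cosh (kk * x)).scomp x (hasDerivAt_lin x)
  simpa [smul_eq_mul, mul_comm, Function.comp_def] using this

lemma hasDerivAt_sh (x : ℝ) :
    HasDerivAt (fun s : ℝ => Complex.sinh (kk * s)) (kk * Complex.cosh (kk * x)) x := by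
  have := (Complex.hasDerivAt_sinh (kk * x)).scomp x (hasDerivAt_lin x)
  simpa [smul_eq_mul, mul_comm, Function.comp_def] using this

lemma hasDerivAt_co (x : ℝ) :
    HasDerivAt (fun s : ℝ => Complex.cos (kk * s)) (-(kk * Complex.sin (kk * x))) x := by
  have := (Complex.hasDerivAt_cos (kk * x)).scomp x (hasDerivAt_lin x)
  simpa [smul_eq_mul, mul_comm, Function.comp_def] using this

lemma hasDerivAt_si (x : ℝ) :
    HasDerivAt (fun s : ℝ => Complex.sin (kk * s)) (kk * Complex.cos (kk * x)) x := by
  have := (Complex.hasDerivAt_sin (kk * x)).scomp x (hasDerivAt_lin x)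
  simpa [smul_eq_mul, mul_comm, Function.comp_def] using this

lemma const_of_hasDerivAt_zero (f : ℝ → ℂ) (h : ∀ x, HasDerivAt f 0 x) (x : ℝ) :
    f x = f 0 :=
  is_const_of_deriv_eq_zero (fun y => (h y).differentiableAt)
    (fun y => (h y).deriv) x 0

/-- Solution of `f'' = 3 f` on ℝ. -/
lemma ode_cosh (f f' f'' : ℝ → ℂ)
    (hf : ∀ x, HasDerivAt f (f' x) x) (hf' : ∀ x, HasDerivAt f' (f'' x) x)
    (hode : ∀ x, f'' x = 3 * f x) (x : ℝ) :
    f x = f 0 * Complex.cosh (kk * x) + (f' 0 / kk) * Complex.sinh (kk * x) := by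
  set C1 : ℝ → ℂ := fun y => f y * kk * Complex.cosh (kk * y) - f' y * Complex.sinh (kk * y)
    with hC1
  set C2 : ℝ → ℂ := fun y => f' y * Complex.cosh (kk * y) - f y * kk * Complex.sinh (kk * y)
    with hC2
  have h1 : ∀ y, HasDerivAt C1 0 y := by
    intro y
    have h := (((hf y).mul_const kk).mul (hasDerivAt_ch y)).sub
      ((hf' y).mul (hasDerivAt_sh y))
    convert h using 1
    · rfl
    · rfl
    rw [hode]
    linear_combination (-(f y * Complex.sinh (kk * y))) * kk_sq
  have h2 : ∀ y, HasDerivAt C2 0 y := by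
    intro y
    have h := ((hf' y).mul (hasDerivAt_ch y)).sub
      (((hf y).mul_const kk).mul (hasDerivAt_sh y))
    convert h using 1
    · rfl
    · rfl
    rw [hode]
    linear_combination (f y * Complex.cosh (kk * y)) * kk_sq
  have e1 : C1 x = C1 0 := const_of_hasDerivAt_zero C1 h1 x
  have e2 : C2 x = C2 0 := const_of_hasDerivAt_zero C2 h2 x
  have key : kk * f x = C1 x * Complex.cosh (kk * x) + C2 x * Complex.sinh (kk * x) := by
    rw [hC1, hC2]
    have h5 := Complex.cosh_sq_sub_sinh_sq (kk * x)
    linear_combination (-(kk * f x)) * h5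
  rw [e1, e2, hC1, hC2] at key
  simp only [Complex.ofReal_zero, mul_zero, Complex.cosh_zero, Complex.sinh_zero,
    mul_one, sub_zero, mul_zero, sub_zero] at key
  have h4 := kk_ne
  field_simp
  linear_combination key

/-- Solution of `f'' = -3 f` on ℝ. -/
lemma ode_cos (f f' f'' : ℝ → ℂ)
    (hf : ∀ x, HasDerivAt f (f' x) x) (hf' : ∀ x, HasDerivAt f' (f'' x) x)
    (hode : ∀ x, f'' x = -3 * f x) (x : ℝ) :
    f x = f 0 * Complex.cos (kk * x) + (f' 0 / kk) * Complex.sin (kk * x) := by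
  set C1 : ℝ → ℂ := fun y => f y * kk * Complex.cos (kk * y) - f' y * Complex.sin (kk * y)
    with hC1
  set C2 : ℝ → ℂ := fun y => f y * kk * Complex.sin (kk * y) + f' y * Complex.cos (kk * y)
    with hC2
  have h1 : ∀ y, HasDerivAt C1 0 y := by
    intro y
    have h := (((hf y).mul_const kk).mul (hasDerivAt_co y)).sub
      ((hf' y).mul (hasDerivAt_si y))
    convert h using 1
    · rfl
    · rfl
    rw [hode]
    linear_combination (f y * Complex.sin (kk * y)) * kk_sq
  have h2 : ∀ y, HasDerivAt C2 0 y := by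
    intro y
    have h := (((hf y).mul_const kk).mul (hasDerivAt_si y)).add
      ((hf' y).mul (hasDerivAt_co y))
    convert h using 1
    · rfl
    · rfl
    rw [hode]
    linear_combination (-(f y * Complex.cos (kk * y))) * kk_sq
  have e1 : C1 x = C1 0 := const_of_hasDerivAt_zero C1 h1 x
  have e2 : C2 x = C2 0 := const_of_hasDerivAt_zero C2 h2 x
  have key : kk * f x = C1 x * Complex.cos (kk * x) + C2 x * Complex.sin (kk * x) := by
    rw [hC1, hC2]
    have h5 := Complex.sin_sq_add_cos_sq (kk * x)
    linear_combination (-(kk * f x)) * h5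
  rw [e1, e2, hC1, hC2] at key
  simp only [Complex.ofReal_zero, mul_zero, Complex.cos_zero, Complex.sin_zero,
    mul_one, sub_zero, add_zero, zero_add, mul_zero] at key
  have h4 := kk_ne
  field_simp
  linear_combination key

section Partials

variable (g : ℝ → ℝ → ℂ)

lemma slice1 (hg : ContDiff ℝ (⊤ : ℕ∞) (Function.uncurry g)) (t : ℝ) : ContDiff ℝ (⊤ : ℕ∞) (fun u => g u t) :=
  hg.comp (contDiff_id.prodMk contDiff_const)

lemma slice2 (hg : ContDiff ℝ (⊤ : ℕ∞) (Function.uncurry g)) (s : ℝ) : ContDiff ℝ (⊤ : ℕ∞) (fun u => g s u) :=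
  hg.comp (contDiff_const.prodMk contDiff_id)

lemma hasDerivAt_pdS (hg : ContDiff ℝ (⊤ : ℕ∞) (Function.uncurry g)) (s t : ℝ) : HasDerivAt (fun u => g u t) (pdS g s t) s :=
  (((slice1 g hg t).differentiable (by simp)) s).hasDerivAt

lemma hasDerivAt_pdT (hg : ContDiff ℝ (⊤ : ℕ∞) (Function.uncurry g)) (s t : ℝ) : HasDerivAt (fun u => g s u) (pdT g s t) t :=
  (((slice2 g hg s).differentiable (by simp)) t).hasDerivAt

lemma pdS_fderiv (hg : ContDiff ℝ (⊤ : ℕ∞) (Function.uncurry g)) (s t : ℝ) :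
    pdS g s t = fderiv ℝ (Function.uncurry g) (s, t) (1, 0) := by
  have hinner : HasFDerivAt (fun u : ℝ => (u, t))
      ((ContinuousLinearMap.id ℝ ℝ).prod (0 : ℝ →L[ℝ] ℝ)) s :=
    (hasFDerivAt_id s).prodMk (hasFDerivAt_const t s)
  have h := ((hg.differentiable (by simp) (s, t)).hasFDerivAt).comp s hinner
  have h2 := h.hasDerivAt
  have h3 : HasDerivAt (fun u => g u t)
      (fderiv ℝ (Function.uncurry g) (s, t) (1, 0)) s := by
    simpa [Function.comp_def, Function.uncurry] using h2
  exact (hasDerivAt_pdS g hg s t).unique h3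

lemma pdT_fderiv (hg : ContDiff ℝ (⊤ : ℕ∞) (Function.uncurry g)) (s t : ℝ) :
    pdT g s t = fderiv ℝ (Function.uncurry g) (s, t) (0, 1) := by
  have hinner : HasFDerivAt (fun u : ℝ => (s, u))
      ((0 : ℝ →L[ℝ] ℝ).prod (ContinuousLinearMap.id ℝ ℝ)) t :=
    (hasFDerivAt_const s t).prodMk (hasFDerivAt_id t)
  have h := ((hg.differentiable (by simp) (s, t)).hasFDerivAt).comp t hinner
  have h2 := h.hasDerivAt
  have h3 : HasDerivAt (fun u => g s u)
      (fderiv ℝ (Function.uncurry g) (s, t) (0, 1)) t := by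
    simpa [Function.comp_def, Function.uncurry] using h2
  exact (hasDerivAt_pdT g hg s t).unique h3

lemma contDiff_pdS (hg : ContDiff ℝ (⊤ : ℕ∞) (Function.uncurry g)) : ContDiff ℝ (⊤ : ℕ∞) (Function.uncurry (pdS g)) := by
  have h : Function.uncurry (pdS g)
      = fun p : ℝ × ℝ => fderiv ℝ (Function.uncurry g) p ((1 : ℝ), (0 : ℝ)) := by
    funext p
    exact pdS_fderiv g hg p.1 p.2
  rw [h]
  exact (hg.fderiv_right (by simp)).clm_apply contDiff_const

lemma contDiff_pdT (hg : ContDiff ℝ (⊤ : ℕ∞) (Function.uncurry g)) : ContDiff ℝ (⊤ : ℕ∞) (Function.uncurry (pdT g)) := by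
  have h : Function.uncurry (pdT g)
      = fun p : ℝ × ℝ => fderiv ℝ (Function.uncurry g) p ((0 : ℝ), (1 : ℝ)) := by
    funext p
    exact pdT_fderiv g hg p.1 p.2
  rw [h]
  exact (hg.fderiv_right (by simp)).clm_apply contDiff_const

/-- If `g` is even in the first variable, `pdS g` is odd in it. -/
lemma pdS_odd (hg : ContDiff ℝ (⊤ : ℕ∞) (Function.uncurry g)) (heven : ∀ s t : ℝ, g (-s) t = g s t) (s t : ℝ) :
    pdS g (-s) t = - pdS g s t := by
  have h0 : HasDerivAt (fun u => g u t) (pdS g s t) (-(-s)) := by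
    rw [neg_neg]; exact hasDerivAt_pdS g hg s t
  have h := h0.scomp (-s) (hasDerivAt_neg (-s))
  have h2 : HasDerivAt (fun u => g u t) (-pdS g s t) (-s) := by
    have heq : ((fun u => g u t) ∘ fun u : ℝ => -u) = fun u => g u t := by
      funext u
      simp [Function.comp, heven]
    rw [heq] at h
    simpa using h
  exact (hasDerivAt_pdS g hg (-s) t).unique h2

/-- If `g` is odd in the first variable, `pdS g` is even in it. -/
lemma pdS_even (hg : ContDiff ℝ (⊤ : ℕ∞) (Function.uncurry g)) (hodd : ∀ s t : ℝ, g (-s) t = - g s t) (s t : ℝ) :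
    pdS g (-s) t = pdS g s t := by
  have h0 : HasDerivAt (fun u => g u t) (pdS g s t) (-(-s)) := by
    rw [neg_neg]; exact hasDerivAt_pdS g hg s t
  have h := h0.scomp (-s) (hasDerivAt_neg (-s))
  have h2 : HasDerivAt (fun u => - g u t) (-pdS g s t) (-s) := by
    have heq : ((fun u => g u t) ∘ fun u : ℝ => -u) = fun u => - g u t := by
      funext u
      simp [Function.comp, hodd]
    rw [heq] at h
    simpa using h
  have h3 := (hasDerivAt_pdS g hg (-s) t).neg
  have := h3.unique h2
  exact neg_injective this

end Partials

end Stmt7Aux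

open Stmt7Aux in
/-- If a smooth `g : ℝ² → ℂ` is even in its first variable and satisfies
the three PDEs `g_{ssss} − g_{tt} − 2g_{ss} − 3g = 0`, `g_{ssss} − 6g_{ss} + 3g_{tt} + 9g = 0`
and `g_{ssst} − 6g_{st} = 0`, then `g(s,t) = a·cosh(√3·s) + b·cos(√3·t) + c·sin(√3·t)` for
some complex constants `a`, `b`, `c`. -/
theorem stmt7 (g : ℝ → ℝ → ℂ)
    (hg : ContDiff ℝ (⊤ : ℕ∞) (Function.uncurry g))
    (heven : ∀ s t : ℝ, g (-s) t = g s t)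
    (hpde1 : ∀ s t : ℝ,
      pdS (pdS (pdS (pdS g))) s t - pdT (pdT g) s t - 2 * pdS (pdS g) s t - 3 * g s t = 0)
    (hpde2 : ∀ s t : ℝ,
      pdS (pdS (pdS (pdS g))) s t - 6 * pdS (pdS g) s t + 3 * pdT (pdT g) s t + 9 * g s t = 0)
    (hpde3 : ∀ s t : ℝ,
      pdT (pdS (pdS (pdS g))) s t - 6 * pdT (pdS g) s t = 0) :
    ∃ a b c : ℂ, ∀ s t : ℝ,
      g s t = a * Complex.cosh ((Real.sqrt 3 * s : ℝ) : ℂ)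
        + b * Complex.cos ((Real.sqrt 3 * t : ℝ) : ℂ)
        + c * Complex.sin ((Real.sqrt 3 * t : ℝ) : ℂ) := by
  -- smoothness of iterated partials
  have hg1 : ContDiff ℝ (⊤ : ℕ∞) (Function.uncurry (pdS g)) := contDiff_pdS g hg
  have hg2 : ContDiff ℝ (⊤ : ℕ∞) (Function.uncurry (pdS (pdS g))) := contDiff_pdS _ hg1
  have hg3 : ContDiff ℝ (⊤ : ℕ∞) (Function.uncurry (pdS (pdS (pdS g)))) := contDiff_pdS _ hg2
  -- parity
  have hodd1 : ∀ s t : ℝ, pdS g (-s) t = - pdS g s t := pdS_odd g hg heven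
  have heven2 : ∀ s t : ℝ, pdS (pdS g) (-s) t = pdS (pdS g) s t := pdS_even _ hg1 hodd1
  have hodd3 : ∀ s t : ℝ, pdS (pdS (pdS g)) (-s) t = - pdS (pdS (pdS g)) s t :=
    pdS_odd _ hg2 heven2
  have hz1 : ∀ t : ℝ, pdS g 0 t = 0 := by
    intro t
    have := hodd1 0 t
    simp only [neg_zero] at this
    linear_combination this / 2
  have hz3 : ∀ t : ℝ, pdS (pdS (pdS g)) 0 t = 0 := by
    intro t
    have := hodd3 0 t
    simp only [neg_zero] at this
    linear_combination this / 2
  -- PDE combinations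
  have hA : ∀ s t : ℝ, pdS (pdS (pdS (pdS g))) s t = 3 * pdS (pdS g) s t := by
    intro s t
    linear_combination (hpde1 s t) * (3 / 4 : ℂ) + (hpde2 s t) * (1 / 4 : ℂ)
  have hB : ∀ s t : ℝ, pdT (pdT g) s t = pdS (pdS g) s t - 3 * g s t := by
    intro s t
    linear_combination (hpde2 s t) * (1 / 4 : ℂ) - (hpde1 s t) * (1 / 4 : ℂ)
  -- the s-direction ODE for g_ss
  have keyA : ∀ s t : ℝ, pdS (pdS g) s t = pdS (pdS g) 0 t * Complex.cosh (kk * s) := by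
    intro s t
    have h := ode_cosh (fun s => pdS (pdS g) s t) (fun s => pdS (pdS (pdS g)) s t)
      (fun s => pdS (pdS (pdS (pdS g))) s t)
      (fun x => hasDerivAt_pdS _ hg2 x t) (fun x => hasDerivAt_pdS _ hg3 x t)
      (fun x => hA x t) s
    rw [hz3 t] at h
    simpa using h
  -- integrate twice in s
  have keyG : ∀ s t : ℝ,
      g s t = pdS (pdS g) 0 t / 3 * Complex.cosh (kk * s) + (g 0 t - pdS (pdS g) 0 t / 3) := by
    intro s t
    set A := pdS (pdS g) 0 t with hAdef
    have hphi' : ∀ x : ℝ, HasDerivAt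
        (fun y : ℝ => pdS g y t - A / 3 * kk * Complex.sinh (kk * y)) (0 : ℂ) x := by
      intro x
      have h := (hasDerivAt_pdS (pdS g) hg1 x t).sub ((hasDerivAt_sh x).const_mul (A / 3 * kk))
      convert h using 1
      · rfl
      · rfl
      rw [keyA x t, ← hAdef]
      linear_combination (A / 3 * Complex.cosh (kk * x)) * kk_sq
    have hphi'c : ∀ x : ℝ, pdS g x t - A / 3 * kk * Complex.sinh (kk * x) = 0 := by
      intro x
      have h := const_of_hasDerivAt_zero _ hphi' x
      simpa [hz1 t] using h
    have hphi : ∀ x : ℝ, HasDerivAt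
        (fun y : ℝ => g y t - A / 3 * Complex.cosh (kk * y)) (0 : ℂ) x := by
      intro x
      have h := (hasDerivAt_pdS g hg x t).sub ((hasDerivAt_ch x).const_mul (A / 3))
      convert h using 1
      · rfl
      · rfl
      linear_combination -(hphi'c x)
    have h := const_of_hasDerivAt_zero _ hphi s
    simp only [Complex.ofReal_zero, mul_zero, Complex.cosh_zero, mul_one] at h
    linear_combination h
  -- formulas for the first and third s-derivatives
  have keyG1 : ∀ s t : ℝ, pdS g s t = pdS (pdS g) 0 t / 3 * kk * Complex.sinh (kk * s) := by
    intro s t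
    have h2 : HasDerivAt (fun u : ℝ => g u t)
        (pdS (pdS g) 0 t / 3 * (kk * Complex.sinh (kk * s))) s := by
      have h := ((hasDerivAt_ch s).const_mul (pdS (pdS g) 0 t / 3)).add_const
        (g 0 t - pdS (pdS g) 0 t / 3)
      have heq : (fun u : ℝ => pdS (pdS g) 0 t / 3 * Complex.cosh (kk * u)
          + (g 0 t - pdS (pdS g) 0 t / 3)) = fun u => g u t := by
        funext u; rw [keyG u t]
      rwa [heq] at h
    have h3 := (hasDerivAt_pdS g hg s t).unique h2
    rw [h3]; ring
  have keyG3 : ∀ s t : ℝ,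
      pdS (pdS (pdS g)) s t = pdS (pdS g) 0 t * kk * Complex.sinh (kk * s) := by
    intro s t
    have h2 : HasDerivAt (fun u : ℝ => pdS (pdS g) u t)
        (pdS (pdS g) 0 t * (kk * Complex.sinh (kk * s))) s := by
      have h := (hasDerivAt_ch s).const_mul (pdS (pdS g) 0 t)
      have heq : (fun u : ℝ => pdS (pdS g) 0 t * Complex.cosh (kk * u))
          = fun u => pdS (pdS g) u t := by
        funext u; rw [keyA u t]
      rwa [heq] at h
    have h3 := (hasDerivAt_pdS (pdS (pdS g)) hg2 s t).unique h2
    rw [h3]; ring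
  -- t-derivative of A := pdS (pdS g) 0 ·
  have hAt : ∀ t : ℝ, HasDerivAt (fun t => pdS (pdS g) 0 t) (pdT (pdS (pdS g)) 0 t) t :=
    fun t => hasDerivAt_pdT _ hg2 0 t
  -- mixed partials via pde3 : A' = 0
  have hmix3 : ∀ s t : ℝ,
      pdT (pdS (pdS (pdS g))) s t = pdT (pdS (pdS g)) 0 t * (kk * Complex.sinh (kk * s)) := by
    intro s t
    have h2 : HasDerivAt (fun τ : ℝ => pdS (pdS (pdS g)) s τ)
        (pdT (pdS (pdS g)) 0 t * (kk * Complex.sinh (kk * s))) t := by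
      have h := (hAt t).mul_const (kk * Complex.sinh (kk * s))
      have heq : (fun τ : ℝ => pdS (pdS g) 0 τ * (kk * Complex.sinh (kk * s)))
          = fun τ => pdS (pdS (pdS g)) s τ := by
        funext τ; rw [keyG3 s τ]; ring
      rwa [heq] at h
    exact (hasDerivAt_pdT _ hg3 s t).unique h2
  have hmix1 : ∀ s t : ℝ,
      pdT (pdS g) s t = pdT (pdS (pdS g)) 0 t * (kk * Complex.sinh (kk * s) / 3) := by
    intro s t
    have h2 : HasDerivAt (fun τ : ℝ => pdS g s τ)
        (pdT (pdS (pdS g)) 0 t * (kk * Complex.sinh (kk * s) / 3)) t := by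
      have h := (hAt t).mul_const (kk * Complex.sinh (kk * s) / 3)
      have heq : (fun τ : ℝ => pdS (pdS g) 0 τ * (kk * Complex.sinh (kk * s) / 3))
          = fun τ => pdS g s τ := by
        funext τ; rw [keyG1 s τ]; ring
      rwa [heq] at h
    exact (hasDerivAt_pdT _ hg1 s t).unique h2
  have hA'zero : ∀ t : ℝ, pdT (pdS (pdS g)) 0 t = 0 := by
    intro t
    have h := hpde3 1 t
    rw [hmix3 1 t, hmix1 1 t] at h
    have h2 : pdT (pdS (pdS g)) 0 t * (kk * Complex.sinh (kk * 1)) = 0 := by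
      linear_combination -h
    have hsh : Complex.sinh (kk * (1 : ℝ)) ≠ 0 := by
      have h3 : Real.sinh (Real.sqrt 3) > 0 := Real.sinh_pos_iff.mpr (by positivity)
      simp only [kk, Complex.ofReal_one, mul_one, ← Complex.ofReal_sinh]
      exact_mod_cast h3.ne'
    rcases mul_eq_zero.mp h2 with h4 | h4
    · exact h4
    · exact absurd h4 (mul_ne_zero kk_ne hsh)
  have hconstA : ∀ t : ℝ, pdS (pdS g) 0 t = pdS (pdS g) 0 0 := by
    intro t
    exact is_const_of_deriv_eq_zero (fun y => (hAt y).differentiableAt)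
      (fun y => by rw [(hAt y).deriv, hA'zero y]) t 0
  -- the t-direction ODE
  set a := pdS (pdS g) 0 0 with hadef
  have hgT : ContDiff ℝ (⊤ : ℕ∞) (Function.uncurry (pdT g)) := contDiff_pdT g hg
  have keyT : ∀ t : ℝ, g 0 t - a / 3
      = (g 0 0 - a / 3) * Complex.cos (kk * t) + (pdT g 0 0 / kk) * Complex.sin (kk * t) := by
    intro t
    have h := ode_cos (fun t => g 0 t - a / 3) (fun t => pdT g 0 t)
      (fun t => pdT (pdT g) 0 t)
      (fun x => (hasDerivAt_pdT g hg 0 x).sub_const _)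
      (fun x => hasDerivAt_pdT (pdT g) hgT 0 x)
      (fun x => by
        show pdT (pdT g) 0 x = -3 * (g 0 x - a / 3)
        linear_combination hB 0 x + hconstA x) t
    simpa using h
  -- conclusion
  refine ⟨a / 3, g 0 0 - a / 3, pdT g 0 0 / kk, ?_⟩
  intro s t
  have h1 := keyG s t
  have h2 := hconstA t
  have h3 := keyT t
  have e1 : ((Real.sqrt 3 * s : ℝ) : ℂ) = kk * s := by simp [kk]
  have e2 : ((Real.sqrt 3 * t : ℝ) : ℂ) = kk * t := by simp [kk]
  rw [e1, e2]
  rw [h2] at h1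
  linear_combination h1 + h3
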